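/- Let α, β, γ > −1 be real numbers and let T = {(x,y) ∈ ℝ² : x > 0, y > 0, x + y < 1}. (i) For every τ₁ > 0 and τ₂ > 0, the integral ∫_T x^α y^β (1−x−y)^γ / (τ₁x + τ₂y) dx dy is infinite if and only if α + β ≤ −1. (ii) For τ₂ = 0 and τ₁ > 0, the integral ∫_T x^{α−1} y^β (1−x−y)^γ dx dy is infinite if and only if α ≤ 0. -/

import Mathlib

open MeasureTheory Set
open scoped ENNReal

/-!
Shearing `(x, y) ↦ (x + y, x)` and then scaling `x = s t` turns the weight
`x^a y^b (1-x-y)^c (x+y)^d` on the triangle into `s^(a+b+d+1) (1-s)^c · t^a (1-t)^b` on the unit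
square, so its integral is a product of two Euler beta integrals, and a beta integral
`∫₀¹ t^a (1-t)^b` with `b > -1` is infinite exactly when `a ≤ -1`. For `τ₁, τ₂ > 0` the
denominator `τ₁x + τ₂y` is within constant factors of `x + y` (the case `d = -1`), and the
second integral is the case `d = 0`.
-/

/-- The beta integral `B(a + 1, b + 1)`, allowed to be infinite. -/
noncomputable def betaLIntegral (a b : ℝ) : ℝ≥0∞ :=
  ∫⁻ t in Ioo (0 : ℝ) 1, ENNReal.ofReal (t ^ a * (1 - t) ^ b)

lemma betaLIntegral_ne_zero (a b : ℝ) : betaLIntegral a b ≠ 0 := by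
  have hpos : Ioo (0 : ℝ) 1 ⊆
      Function.support fun t : ℝ => ENNReal.ofReal (t ^ a * (1 - t) ^ b) :=
    fun t ht => (ENNReal.ofReal_pos.2 (mul_pos (Real.rpow_pos_of_pos ht.1 a)
      (Real.rpow_pos_of_pos (sub_pos.2 ht.2) b))).ne'
  refine ((setLIntegral_pos_iff (by fun_prop)).2 ?_).ne'
  simp [inter_eq_right.2 hpos]

lemma betaLIntegral_ne_top {a b : ℝ} (ha : -1 < a) (hb : -1 < b) : betaLIntegral a b ≠ ⊤ := by
  have h := ProbabilityTheory.lintegral_betaPDF_eq_one (α := a + 1) (β := b + 1)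
    (by linarith) (by linarith)
  simp only [ProbabilityTheory.lintegral_betaPDF, add_sub_cancel_right, mul_assoc] at h
  have hB := ProbabilityTheory.beta_pos (α := a + 1) (β := b + 1) (by linarith) (by linarith)
  rw [setLIntegral_congr_fun measurableSet_Ioo fun t ht => ENNReal.ofReal_mul (by positivity),
    lintegral_const_mul' _ _ ENNReal.ofReal_ne_top] at h
  intro htop
  rw [betaLIntegral] at htop
  rw [htop, ENNReal.mul_top (by simpa using hB)] at h
  exact ENNReal.top_ne_one h

lemma betaLIntegral_eq_top {a : ℝ} (ha : a ≤ -1) (b : ℝ) : betaLIntegral a b = ⊤ := by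
  by_contra htop
  have hint : IntegrableOn (fun t : ℝ => t ^ a * (1 - t) ^ b) (Ioo 0 1) :=
    (lintegral_ofReal_ne_top_iff_integrable (by fun_prop)
      ((ae_restrict_iff' measurableSet_Ioo).2 (ae_of_all _ fun t ht => by
        have := ht.1; have := ht.2; positivity))).1 htop
  have hcont : ContinuousOn (fun t : ℝ => (1 - t) ^ (-b)) (Icc 0 (1 / 2)) :=
    (continuousOn_const.sub continuousOn_id).rpow_const fun t ht => Or.inl (by
      simp only [Pi.sub_apply, id]; linarith [ht.2])
  have hrpow : IntegrableOn (fun t : ℝ => t ^ a) (Ioo 0 (1 / 2)) := by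
    refine ((hint.mono_set (Ioo_subset_Ioo_right (by norm_num))).mul_continuousOn_of_subset hcont
      measurableSet_Ioo isCompact_Icc Ioo_subset_Icc_self).congr_fun (fun t ht => ?_)
      measurableSet_Ioo
    change t ^ a * (1 - t) ^ b * (1 - t) ^ (-b) = t ^ a
    rw [mul_assoc, ← Real.rpow_add (by linarith [ht.2]), add_neg_cancel, Real.rpow_zero, mul_one]
  linarith [(intervalIntegral.integrableOn_Ioo_rpow_iff (by norm_num)).1 hrpow]

lemma betaLIntegral_eq_top_iff {a b : ℝ} (hb : -1 < b) : betaLIntegral a b = ⊤ ↔ a ≤ -1 :=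
  ⟨fun h => not_lt.1 fun ha => betaLIntegral_ne_top ha hb h, fun ha => betaLIntegral_eq_top ha b⟩

lemma lintegral_Ioo_rpow_mul_sub_rpow (a b : ℝ) {r : ℝ} (hr : 0 < r) :
    ∫⁻ x in Ioo 0 r, ENNReal.ofReal (x ^ a * (r - x) ^ b)
      = ENNReal.ofReal (r ^ (a + b + 1)) * betaLIntegral a b := by
  have himage : (r * ·) '' Ioo 0 1 = Ioo 0 r := by
    rw [image_mul_left_Ioo hr, mul_zero, mul_one]
  rw [← himage, lintegral_image_eq_lintegral_abs_deriv_mul measurableSet_Ioo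
      (f := (r * ·)) (f' := fun _ => r)
      (fun t _ => by simpa using ((hasDerivAt_id t).const_mul r).hasDerivWithinAt)
      (mul_right_injective₀ hr.ne').injOn, betaLIntegral,
    ← lintegral_const_mul' _ _ ENNReal.ofReal_ne_top]
  refine setLIntegral_congr_fun measurableSet_Ioo fun t ht => ?_
  have h1t : 0 ≤ 1 - t := by linarith [ht.2]
  rw [abs_of_pos hr, ← ENNReal.ofReal_mul hr.le, ← ENNReal.ofReal_mul (by positivity)]
  congr 1
  rw [show r - r * t = r * (1 - t) by ring, Real.mul_rpow hr.le ht.1.le, Real.mul_rpow hr.le h1t,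
    Real.rpow_add hr, Real.rpow_add hr, Real.rpow_one]
  ring

lemma setLIntegral_subgraph_Ioo {s : Set ℝ} (hs : MeasurableSet s) {φ : ℝ → ℝ}
    (hφ : Measurable φ) {F : ℝ × ℝ → ℝ≥0∞} (hF : Measurable F) :
    ∫⁻ p in {p : ℝ × ℝ | p.1 ∈ s ∧ p.2 ∈ Ioo 0 (φ p.1)}, F p
      = ∫⁻ x in s, ∫⁻ y in Ioo 0 (φ x), F (x, y) := by
  have hS : MeasurableSet {p : ℝ × ℝ | p.1 ∈ s ∧ p.2 ∈ Ioo 0 (φ p.1)} :=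
    (measurable_fst hs).inter ((measurableSet_lt measurable_const measurable_snd).inter
      (measurableSet_lt measurable_snd (hφ.comp measurable_fst)))
  rw [← lintegral_indicator hS, Measure.volume_eq_prod,
    lintegral_prod _ (hF.indicator hS).aemeasurable, ← lintegral_indicator hs]
  congr 1
  funext x
  by_cases hx : x ∈ s
  · rw [indicator_of_mem hx, ← lintegral_indicator measurableSet_Ioo]
    congr 1
    funext y
    simp [indicator, hx]
  · simp [hx]

abbrev triangle : Set (ℝ × ℝ) := {p : ℝ × ℝ | 0 < p.1 ∧ 0 < p.2 ∧ p.1 + p.2 < 1}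

lemma measurableSet_triangle : MeasurableSet triangle :=
  (measurableSet_lt measurable_const measurable_fst).inter
    ((measurableSet_lt measurable_const measurable_snd).inter
      (measurableSet_lt (measurable_fst.add measurable_snd) measurable_const))

lemma lintegral_triangle (a b c d : ℝ) :
    ∫⁻ p in triangle,
        ENNReal.ofReal (p.1 ^ a * p.2 ^ b * (1 - p.1 - p.2) ^ c * (p.1 + p.2) ^ d)
      = betaLIntegral a b * betaLIntegral (a + b + d + 1) c := by
  have hpre : (fun z : ℝ × ℝ => (z.2, z.1 - z.2)) ⁻¹' triangle
      = {z : ℝ × ℝ | z.1 ∈ Ioo 0 1 ∧ z.2 ∈ Ioo 0 (id z.1)} := by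
    ext ⟨s, x⟩
    simp only [mem_preimage, mem_ofPred_eq, mem_Ioo, id, add_sub_cancel, sub_pos]
    constructor
    · rintro ⟨hx, hxs, hs⟩; exact ⟨⟨by linarith, hs⟩, hx, hxs⟩
    · rintro ⟨⟨_, hs⟩, hx, hxs⟩; exact ⟨hx, hxs, hs⟩
  have hshear := (measurePreserving_prod_sub_swap (volume : Measure ℝ) volume)
    |>.setLIntegral_comp_preimage measurableSet_triangle (f := fun p : ℝ × ℝ =>
      ENNReal.ofReal (p.1 ^ a * p.2 ^ b * (1 - p.1 - p.2) ^ c * (p.1 + p.2) ^ d)) (by fun_prop)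
  rw [Measure.volume_eq_prod, ← hshear, hpre, ← Measure.volume_eq_prod,
    setLIntegral_subgraph_Ioo measurableSet_Ioo measurable_id (by fun_prop),
    betaLIntegral.eq_1 (a + b + d + 1), ← lintegral_const_mul _ (by fun_prop)]
  refine setLIntegral_congr_fun measurableSet_Ioo fun s ⟨hs_pos, hs_lt⟩ => ?_
  have hs0 : 0 ≤ 1 - s := by linarith
  dsimp only [id]
  calc ∫⁻ x in Ioo 0 s,
        ENNReal.ofReal (x ^ a * (s - x) ^ b * (1 - x - (s - x)) ^ c * (x + (s - x)) ^ d)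
      = ∫⁻ x in Ioo 0 s,
          ENNReal.ofReal ((1 - s) ^ c * s ^ d) * ENNReal.ofReal (x ^ a * (s - x) ^ b) := by
        refine setLIntegral_congr_fun measurableSet_Ioo fun x hx => ?_
        rw [← ENNReal.ofReal_mul (by positivity), show 1 - x - (s - x) = 1 - s by ring,
          add_sub_cancel]
        ring_nf
    _ = betaLIntegral a b * ENNReal.ofReal (s ^ (a + b + d + 1) * (1 - s) ^ c) := by
        rw [lintegral_const_mul' _ _ ENNReal.ofReal_ne_top,
          lintegral_Ioo_rpow_mul_sub_rpow a b hs_pos, ← mul_assoc, mul_comm,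
          ← ENNReal.ofReal_mul (by positivity)]
        congr 2
        rw [show a + b + d + 1 = d + (a + b + 1) by ring, Real.rpow_add hs_pos d]
        ring

lemma lintegral_eq_top_of_ae_le_const_mul {α : Type*} [MeasurableSpace α] {μ : Measure α}
    {f g : α → ℝ≥0∞} {c : ℝ≥0∞} (hc : c ≠ ⊤) (hfg : ∀ᵐ x ∂μ, f x ≤ c * g x)
    (hf : ∫⁻ x, f x ∂μ = ⊤) : ∫⁻ x, g x ∂μ = ⊤ := by
  have h : ∫⁻ x, f x ∂μ ≤ c * ∫⁻ x, g x ∂μ :=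
    (lintegral_mono_ae hfg).trans_eq (lintegral_const_mul' _ _ hc)
  rw [hf, top_le_iff, ENNReal.mul_eq_top] at h
  tauto

lemma setLIntegral_div_linear_eq_top_iff {S : Set (ℝ × ℝ)} (hS : MeasurableSet S)
    (hSpos : ∀ p ∈ S, 0 < p.1 ∧ 0 < p.2) {g : ℝ × ℝ → ℝ} (hg : ∀ p ∈ S, 0 ≤ g p)
    {τ₁ τ₂ : ℝ} (hτ₁ : 0 < τ₁) (hτ₂ : 0 < τ₂) :
    ∫⁻ p in S, ENNReal.ofReal (g p / (τ₁ * p.1 + τ₂ * p.2)) = ⊤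
      ↔ ∫⁻ p in S, ENNReal.ofReal (g p / (p.1 + p.2)) = ⊤ := by
  have hm : 0 < min τ₁ τ₂ := lt_min hτ₁ hτ₂
  constructor
  · refine lintegral_eq_top_of_ae_le_const_mul (c := ENNReal.ofReal (min τ₁ τ₂)⁻¹)
      ENNReal.ofReal_ne_top (ae_restrict_of_forall_mem hS fun p hp => ?_)
    obtain ⟨hx, hy⟩ := hSpos p hp
    have hlin : (p.1 + p.2) * min τ₁ τ₂ ≤ τ₁ * p.1 + τ₂ * p.2 := by
      nlinarith [min_le_left τ₁ τ₂, min_le_right τ₁ τ₂]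
    rw [← ENNReal.ofReal_mul (inv_nonneg.2 hm.le), ← div_eq_inv_mul, div_div]
    exact ENNReal.ofReal_le_ofReal
      (div_le_div_of_nonneg_left (hg p hp) (by positivity) hlin)
  · refine lintegral_eq_top_of_ae_le_const_mul (c := ENNReal.ofReal (max τ₁ τ₂))
      ENNReal.ofReal_ne_top (ae_restrict_of_forall_mem hS fun p hp => ?_)
    obtain ⟨hx, hy⟩ := hSpos p hp
    have hM : 0 < max τ₁ τ₂ := lt_max_of_lt_left hτ₁
    have hlin : τ₁ * p.1 + τ₂ * p.2 ≤ max τ₁ τ₂ * (p.1 + p.2) := by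
      nlinarith [le_max_left τ₁ τ₂, le_max_right τ₁ τ₂]
    rw [← ENNReal.ofReal_mul hM.le, ← mul_div_assoc]
    refine ENNReal.ofReal_le_ofReal ?_
    calc g p / (p.1 + p.2) = max τ₁ τ₂ * g p / (max τ₁ τ₂ * (p.1 + p.2)) := by
          rw [mul_div_mul_left _ _ hM.ne']
      _ ≤ max τ₁ τ₂ * g p / (τ₁ * p.1 + τ₂ * p.2) :=
          div_le_div_of_nonneg_left (mul_nonneg hM.le (hg p hp)) (by positivity) hlin

/-- Recurrence criterion for the continuous-time QBD processes `𝒜 = τ₁J₁ + τ₂J₂`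
associated with the orthogonal polynomials on the triangle (normalized at `(0,0)`):
for `τ₁, τ₂ > 0` the Lebesgue integral of `x^α y^β (1−x−y)^γ / (τ₁x + τ₂y)` over the
open triangle is infinite iff `α + β ≤ −1`; for `τ₂ = 0 < τ₁` the integral of
`x^{α−1} y^β (1−x−y)^γ` is infinite iff `α ≤ 0`. -/
theorem stmt_12 (α β γ : ℝ) (hα : -1 < α) (hβ : -1 < β) (hγ : -1 < γ) :
    (∀ τ₁ τ₂ : ℝ, 0 < τ₁ → 0 < τ₂ →
      ((∫⁻ p : ℝ × ℝ in {p : ℝ × ℝ | 0 < p.1 ∧ 0 < p.2 ∧ p.1 + p.2 < 1},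
          ENNReal.ofReal (p.1 ^ α * p.2 ^ β * (1 - p.1 - p.2) ^ γ /
            (τ₁ * p.1 + τ₂ * p.2))) = ⊤ ↔ α + β ≤ -1)) ∧
    ((∫⁻ p : ℝ × ℝ in {p : ℝ × ℝ | 0 < p.1 ∧ 0 < p.2 ∧ p.1 + p.2 < 1},
        ENNReal.ofReal (p.1 ^ (α - 1) * p.2 ^ β * (1 - p.1 - p.2) ^ γ)) = ⊤
      ↔ α ≤ 0) := by
  have hKtop : betaLIntegral (α + β) γ = ⊤ ↔ α + β ≤ -1 := betaLIntegral_eq_top_iff hγ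
  refine ⟨fun τ₁ τ₂ hτ₁ hτ₂ => ?_, ?_⟩
  · have hI := lintegral_triangle α β γ (-1)
    simp only [Real.rpow_neg_one, ← div_eq_mul_inv, show α + β + -1 + 1 = α + β by ring] at hI
    have hg : ∀ p ∈ triangle, 0 ≤ p.1 ^ α * p.2 ^ β * (1 - p.1 - p.2) ^ γ :=
      fun p ⟨hx, hy, hxy⟩ => mul_nonneg
        (mul_nonneg (Real.rpow_nonneg hx.le α) (Real.rpow_nonneg hy.le β))
        (Real.rpow_nonneg (by linarith) γ)
    rw [setLIntegral_div_linear_eq_top_iff measurableSet_triangle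
      (fun p hp => ⟨hp.1, hp.2.1⟩) hg hτ₁ hτ₂, hI, ← hKtop]
    simp [ENNReal.mul_eq_top, betaLIntegral_ne_zero, betaLIntegral_ne_top hα hβ]
  · have hI := lintegral_triangle (α - 1) β γ 0
    simp only [Real.rpow_zero, mul_one, show α - 1 + β + 0 + 1 = α + β by ring] at hI
    rw [hI, ENNReal.mul_eq_top, betaLIntegral_eq_top_iff hβ, hKtop]
    simp only [betaLIntegral_ne_zero, ne_eq, not_false_eq_true, true_and, and_true]
    exact ⟨by rintro (h | h) <;> linarith, fun h => Or.inr (by linarith)⟩
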